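/- arXiv:0803.0090 — 2 statements merged into one kernel-verified Lean document; each statement's English description precedes it below -/
import Mathlib

section
/- In the additive group A = ZMod 22 × ZMod 16 × ZMod 4 × ZMod 2, the element (0,0,0,1) does not lie in the subgroup generated by the ten elements (10,0,0,0), (0,13,3,0), (0,0,2,0), (19,0,0,1), (1,0,3,0), (1,13,0,0), (1,0,0,1), (19,0,1,0), (21,1,0,0), (0,12,0,0). -/
/-! The sum of all four coordinates reduced mod 2 is a homomorphism to `ZMod 2` that kills
every generator but takes the value `1` at `(0, 0, 0, 1)`. -/

theorem notMem_addSubgroupClosure_of_map_eq_zero {G H : Type*} [AddGroup G] [AddGroup H]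
    (f : G →+ H) {s : Set G} {x : G} (hs : ∀ y ∈ s, f y = 0) (hx : f x ≠ 0) :
    x ∉ AddSubgroup.closure s :=
  fun hmem => hx ((AddSubgroup.closure_le f.ker).mpr hs hmem)

def coordinateSumMod2 : ZMod 22 × ZMod 16 × ZMod 4 × ZMod 2 →+ ZMod 2 :=
  (ZMod.castHom (by norm_num : 2 ∣ 22) (ZMod 2)).toAddMonoidHom.coprod <|
    (ZMod.castHom (by norm_num : 2 ∣ 16) (ZMod 2)).toAddMonoidHom.coprod <|
      (ZMod.castHom (by norm_num : 2 ∣ 4) (ZMod 2)).toAddMonoidHom.coprod (AddMonoidHom.id _)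

theorem target_not_in_subgroup_generated_by_images :
    (0, 0, 0, 1) ∉ AddSubgroup.closure
      ({(10, 0, 0, 0), (0, 13, 3, 0), (0, 0, 2, 0), (19, 0, 0, 1), (1, 0, 3, 0),
        (1, 13, 0, 0), (1, 0, 0, 1), (19, 0, 1, 0), (21, 1, 0, 0), (0, 12, 0, 0)} :
        Set (ZMod 22 × ZMod 16 × ZMod 4 × ZMod 2)) := by
  refine notMem_addSubgroupClosure_of_map_eq_zero coordinateSumMod2 ?_ (by decide)
  simp only [Set.mem_insert_iff, Set.mem_singleton_iff, forall_eq_or_imp, forall_eq]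
  decide
end

section
/- The additive group homomorphism from Z^10 to ZMod 22 × ZMod 16 × ZMod 4 × ZMod 2 sending the i-th standard basis vector (for i = 1,...,10) to the elements (10,0,0,0), (0,13,3,0), (0,0,2,0), (19,0,0,1), (1,0,3,0), (1,13,0,0), (1,0,0,1), (19,0,1,0), (21,1,0,0), (0,12,0,0), respectively, is not surjective. -/
/-!
The parity character `(a, b, c, d) ↦ a + b + c + d (mod 2)` is well defined on
`ZMod 22 × ZMod 16 × ZMod 4 × ZMod 2` because all four moduli are even. Each of the ten
generators has even coordinate sum, so the character kills the image of `f`, yet it does not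
vanish on `(1, 0, 0, 0)`.
-/

theorem AddMonoidHom.not_surjective_of_comp_eq_zero {M N P : Type*} [AddZeroClass M]
    [AddZeroClass N] [AddZeroClass P] {f : M →+ N} {φ : N →+ P} (hφ : φ ≠ 0)
    (h : φ.comp f = 0) : ¬ Function.Surjective f := fun hf =>
  hφ <| (AddMonoidHom.cancel_right hf).1 <| by rw [h, AddMonoidHom.zero_comp]

theorem AddMonoidHom.eq_zero_of_map_single_one {ι M : Type*} [Finite ι] [DecidableEq ι]
    [AddCommMonoid M] {g : (ι → ℤ) →+ M} (h : ∀ i, g (Pi.single i 1) = 0) : g = 0 := by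
  ext i
  simpa using h i

def coordSumModTwo : ZMod 22 × ZMod 16 × ZMod 4 × ZMod 2 →+ ZMod 2 :=
  (ZMod.castHom (by norm_num : 2 ∣ 22) (ZMod 2)).toAddMonoidHom.coprod <|
    (ZMod.castHom (by norm_num : 2 ∣ 16) (ZMod 2)).toAddMonoidHom.coprod <|
      (ZMod.castHom (by norm_num : 2 ∣ 4) (ZMod 2)).toAddMonoidHom.coprod (AddMonoidHom.id _)

theorem coordSumModTwo_ne_zero : coordSumModTwo ≠ 0 :=
  DFunLike.ne_iff.2 ⟨(1, 0, 0, 0), by decide⟩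

theorem hom_from_Z10_not_surjective
    (f : (Fin 10 → ℤ) →+ (ZMod 22 × ZMod 16 × ZMod 4 × ZMod 2))
    (hf : ∀ i : Fin 10, f (Pi.single i 1) =
      ![(10, 0, 0, 0), (0, 13, 3, 0), (0, 0, 2, 0), (19, 0, 0, 1), (1, 0, 3, 0),
        (1, 13, 0, 0), (1, 0, 0, 1), (19, 0, 1, 0), (21, 1, 0, 0), (0, 12, 0, 0)] i) :
    ¬ Function.Surjective f := by
  refine AddMonoidHom.not_surjective_of_comp_eq_zero coordSumModTwo_ne_zero ?_
  refine AddMonoidHom.eq_zero_of_map_single_one fun i => ?_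
  rw [AddMonoidHom.comp_apply, hf]
  revert i
  decide
end
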